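/- Let K be a field, n ≥ 1, and let M, N ∈ K(x,y)^{n×n} with σ_x = σ_y = id, δ_x = d/dx, δ_y = d/dy. Suppose the compatibility condition NM + δ_x(N) = MN + δ_y(M) holds (δ applied entrywise). Write M = (1/u)U and N = (1/v)V with u,v ∈ K[x,y] and U,V ∈ K[x,y]^{n×n}, gcd conditions as usual. Then every irreducible factor p of u with deg_y(p) > 0 also divides v; consequently the squarefree part of u in K(x)[y] divides the squarefree part of v in K(x)[y]. -/
import Mathlib


open MvPolynomial

noncomputable def Etr (K : Type*) [CommSemiring K] :
    MvPolynomial (Fin 2) K ≃ₐ[K] Polynomial (MvPolynomial (Fin 1) K) :=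
  (renameEquiv K (Equiv.swap (0 : Fin 2) 1)).trans (finSuccEquiv K 1)

lemma Etr_pderiv (K : Type*) [CommRing K] (q : MvPolynomial (Fin 2) K) :
    Etr K (pderiv 1 q) = Polynomial.derivative (Etr K q) := by
  induction q using MvPolynomial.induction_on with
  | C a => simp [Etr, pderiv_C, finSuccEquiv_apply]
  | add f g hf hg => simp [map_add, hf, hg]
  | mul_X f m hf =>
    rw [pderiv_mul, map_add, map_mul, map_mul, hf, map_mul, Polynomial.derivative_mul]
    fin_cases m <;> simp only [Fin.zero_eta, Fin.mk_one, Fin.isValue]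
    · rw [pderiv_X_of_ne (by decide)]
      have : Etr K (X (0 : Fin 2)) = Polynomial.C (X 0) := by
        simp [Etr, Equiv.swap_apply_left]
        rw [show ((1 : Fin 2)) = Fin.succ 0 from rfl, finSuccEquiv_X_succ]
      simp [this]
    · rw [pderiv_X_self]
      have : Etr K (X (1 : Fin 2)) = Polynomial.X := by
        simp [Etr, Equiv.swap_apply_right, finSuccEquiv_X_zero]
      simp [this]

lemma Etr_natDegree (K : Type*) [CommSemiring K] (q : MvPolynomial (Fin 2) K) :
    (Etr K q).natDegree = degreeOf 1 q := by
  rw [Etr]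
  simp only [AlgEquiv.trans_apply, renameEquiv_apply]
  rw [natDegree_finSuccEquiv]
  have := degreeOf_rename_of_injective (Equiv.swap (0 : Fin 2) 1).injective (p := q) 1
  rw [Equiv.swap_apply_right] at this
  exact this

lemma not_dvd_pderiv (K : Type*) [Field K] [CharZero K] (p : MvPolynomial (Fin 2) K)
    (hdeg : 0 < degreeOf 1 p) : ¬ p ∣ pderiv 1 p := by
  intro hdvd
  have h1 : (Etr K p).natDegree ≠ 0 := by rw [Etr_natDegree]; omega
  have h2 : Polynomial.derivative (Etr K p) ≠ 0 := by
    intro h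
    exact h1 (Polynomial.natDegree_eq_zero_of_derivative_eq_zero h)
  have h3 : Etr K p ∣ Polynomial.derivative (Etr K p) := by
    rw [← Etr_pderiv]
    exact (Etr K).toRingHom.map_dvd hdvd
  have := Polynomial.natDegree_le_of_dvd h3 h2
  have := Polynomial.natDegree_derivative_lt h1
  omega


set_option maxHeartbeats 1600000 in
/-- Proposition 1: in the differential case, every irreducible factor of u with
positive y-degree also divides v (radical of u divides radical of v in K(x)[y]).
Here K[x,y] is `MvPolynomial (Fin 2) K` (0 = x, 1 = y), F = K(x,y) its fraction
field, δx, δy are derivations on F extending the partial derivatives, M = (1/u)U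
and N = (1/v)V are the multiplication matrices in lowest terms, satisfying the
compatibility condition NM + δx(N) = MN + δy(M). -/
theorem irreducible_factor_of_u_divides_v
    (K : Type*) [Field K] [CharZero K] (n : ℕ)
    (δx δy : FractionRing (MvPolynomial (Fin 2) K) → FractionRing (MvPolynomial (Fin 2) K))
    (hxadd : ∀ f g, δx (f + g) = δx f + δx g)
    (hyadd : ∀ f g, δy (f + g) = δy f + δy g)
    (hxmul : ∀ f g, δx (f * g) = δx f * g + f * δx g)
    (hymul : ∀ f g, δy (f * g) = δy f * g + f * δy g)
    (hxcompat : ∀ q : MvPolynomial (Fin 2) K,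
      δx (algebraMap _ (FractionRing (MvPolynomial (Fin 2) K)) q) =
        algebraMap _ _ (pderiv 0 q))
    (hycompat : ∀ q : MvPolynomial (Fin 2) K,
      δy (algebraMap _ (FractionRing (MvPolynomial (Fin 2) K)) q) =
        algebraMap _ _ (pderiv 1 q))
    (M N : Matrix (Fin n) (Fin n) (FractionRing (MvPolynomial (Fin 2) K)))
    (u v : MvPolynomial (Fin 2) K) (hu0 : u ≠ 0) (hv0 : v ≠ 0)
    (U V : Matrix (Fin n) (Fin n) (MvPolynomial (Fin 2) K))
    (hM : ∀ i j, algebraMap _ (FractionRing (MvPolynomial (Fin 2) K)) u * M i j =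
      algebraMap _ _ (U i j))
    (hN : ∀ i j, algebraMap _ (FractionRing (MvPolynomial (Fin 2) K)) v * N i j =
      algebraMap _ _ (V i j))
    (hUlow : ∀ q : MvPolynomial (Fin 2) K, Irreducible q → q ∣ u → ∃ i j, ¬ q ∣ U i j)
    (hVlow : ∀ q : MvPolynomial (Fin 2) K, Irreducible q → q ∣ v → ∃ i j, ¬ q ∣ V i j)
    (hcompat : ∀ i j, (N * M) i j + δx (N i j) = (M * N) i j + δy (M i j)) :
    ∀ p : MvPolynomial (Fin 2) K,
      Irreducible p → p ∣ u → 0 < degreeOf 1 p → p ∣ v := by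
  intro p hp hpu hdeg
  classical
  set φ := algebraMap (MvPolynomial (Fin 2) K)
      (FractionRing (MvPolynomial (Fin 2) K)) with hφ
  have hinj : Function.Injective φ :=
    IsFractionRing.injective (MvPolynomial (Fin 2) K)
      (FractionRing (MvPolynomial (Fin 2) K))
  have hprime : Prime p := UniqueFactorizationMonoid.irreducible_iff_prime.mp hp
  -- cleared entrywise identities
  have keyM : ∀ i j, φ (u * pderiv 1 (U i j) - pderiv 1 u * U i j)
      = φ u * (φ u * δy (M i j)) := by
    intro i j
    have h1 : δy (φ u * M i j) = φ (pderiv 1 (U i j)) := by rw [hM i j, hycompat]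
    rw [hymul, hycompat] at h1
    calc φ (u * pderiv 1 (U i j) - pderiv 1 u * U i j)
        = φ u * φ (pderiv 1 (U i j)) - φ (pderiv 1 u) * (φ u * M i j) := by
          rw [map_sub, map_mul, map_mul, hM i j]
      _ = φ u * (φ u * δy (M i j)) := by rw [← h1]; ring
  have keyN : ∀ i j, φ (v * pderiv 0 (V i j) - pderiv 0 v * V i j)
      = φ v * (φ v * δx (N i j)) := by
    intro i j
    have h1 : δx (φ v * N i j) = φ (pderiv 0 (V i j)) := by rw [hN i j, hxcompat]
    rw [hxmul, hxcompat] at h1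
    calc φ (v * pderiv 0 (V i j) - pderiv 0 v * V i j)
        = φ v * φ (pderiv 0 (V i j)) - φ (pderiv 0 v) * (φ v * N i j) := by
          rw [map_sub, map_mul, map_mul, hN i j]
      _ = φ v * (φ v * δx (N i j)) := by rw [← h1]; ring
  have keyNM : ∀ i j, φ ((V * U) i j) = φ v * φ u * ((N * M) i j) := by
    intro i j
    rw [Matrix.mul_apply, Matrix.mul_apply, map_sum, Finset.mul_sum]
    refine Finset.sum_congr rfl fun k _ => ?_
    rw [map_mul, ← hM k j, ← hN i k]; ring
  have keyMN : ∀ i j, φ ((U * V) i j) = φ u * φ v * ((M * N) i j) := by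
    intro i j
    rw [Matrix.mul_apply, Matrix.mul_apply, map_sum, Finset.mul_sum]
    refine Finset.sum_congr rfl fun k _ => ?_
    rw [map_mul, ← hM i k, ← hN k j]; ring
  obtain ⟨i, j, hUij⟩ := hUlow p hp hpu
  have main : u * v * ((V * U) i j)
        + u * u * (v * pderiv 0 (V i j) - pderiv 0 v * V i j)
      = u * v * ((U * V) i j)
        + v * v * (u * pderiv 1 (U i j) - pderiv 1 u * U i j) := by
    apply hinj
    simp only [map_add, map_mul]
    rw [keyNM i j, keyMN i j, keyN i j, keyM i j]
    linear_combination (φ u * φ u * (φ v * φ v)) * hcompat i j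
  -- extract p-power from u
  obtain ⟨e, w, hw, hue⟩ := WfDvdMonoid.max_power_factor hu0 hp
  obtain ⟨m, rfl⟩ : ∃ m, e = m + 1 := by
    cases e with
    | zero =>
      exfalso; apply hw
      rw [hue, pow_zero, one_mul] at hpu; exact hpu
    | succ m => exact ⟨m, rfl⟩
  have hp0 : p ≠ 0 := hp.ne_zero
  have hpow : pderiv 1 (p ^ (m + 1))
      = ((m + 1 : ℕ) : MvPolynomial (Fin 2) K) * p ^ m * pderiv 1 p := by
    rw [Derivation.leibniz_pow]
    simp only [Nat.add_sub_cancel, smul_eq_mul, nsmul_eq_mul]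
    ring
  have hdvd1 : p ^ (m + 1) ∣ v * v * (pderiv 1 u * U i j) := by
    have heq : v * v * (pderiv 1 u * U i j)
        = u * (v * ((U * V) i j) - v * ((V * U) i j)
            - u * (v * pderiv 0 (V i j) - pderiv 0 v * V i j)
            + v * v * pderiv 1 (U i j)) := by
      linear_combination main
    rw [heq, hue]
    exact Dvd.dvd.mul_right (dvd_mul_right _ _) _
  have heq2 : v * v * (pderiv 1 u * U i j)
      = p ^ m * (((m + 1 : ℕ) : MvPolynomial (Fin 2) K)
            * (pderiv 1 p * w * (v * v) * U i j))
        + p ^ (m + 1) * (v * v * pderiv 1 w * U i j) := by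
    rw [hue, pderiv_mul, hpow]; ring
  have h5 : p ^ (m + 1) ∣ p ^ m * (((m + 1 : ℕ) : MvPolynomial (Fin 2) K)
      * (pderiv 1 p * w * (v * v) * U i j)) := by
    rw [heq2] at hdvd1
    have h' : p ^ (m + 1) ∣ p ^ (m + 1) * (v * v * pderiv 1 w * U i j) :=
      dvd_mul_right _ _
    have h'' := dvd_sub hdvd1 h'
    rwa [add_sub_cancel_right] at h''
  have h6 : p ∣ ((m + 1 : ℕ) : MvPolynomial (Fin 2) K)
      * (pderiv 1 p * w * (v * v) * U i j) := by
    rw [pow_succ] at h5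
    exact (mul_dvd_mul_iff_left (pow_ne_zero m hp0)).mp h5
  have hcastunit : IsUnit (((m + 1 : ℕ) : MvPolynomial (Fin 2) K)) := by
    rw [← map_natCast (C : K →+* MvPolynomial (Fin 2) K) (m + 1)]
    exact (isUnit_iff_ne_zero.mpr (Nat.cast_ne_zero.mpr (Nat.succ_ne_zero m))).map
      (C : K →+* MvPolynomial (Fin 2) K)
  have h7 : p ∣ pderiv 1 p * w * (v * v) * U i j := by
    rcases hprime.dvd_mul.mp h6 with h | h
    · exact absurd (isUnit_of_dvd_unit h hcastunit) hp.not_isUnit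
    · exact h
  rcases hprime.dvd_mul.mp h7 with h | h
  · rcases hprime.dvd_mul.mp h with h | h
    · rcases hprime.dvd_mul.mp h with h | h
      · exact absurd h (not_dvd_pderiv K p hdeg)
      · exact absurd h hw
    · rcases hprime.dvd_mul.mp h with h | h
      · exact h
      · exact h
  · exact absurd h hUij
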